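/- arXiv:2410.00281 — 5 statements merged into one kernel-verified Lean document; each statement's English description precedes it below -/
import Mathlib

section
/- Let q = p^m with p prime, k a divisor of q-1, and n = (q-1)/k. The generalized Paley graph Γ(k,q) = Cay(F_q, R_k) is connected if and only if the multiplicative order of p modulo n equals m. -/
/-- The set of nonzero `k`-th powers in a field. -/
def Rset (F : Type*) [Field F] (k : ℕ) : Set F := {x | ∃ y : F, y ≠ 0 ∧ y ^ k = x}

/-- `Γ(k,q)` is connected (i.e. the connection set `R_k` generates `F_q` additively)
iff the multiplicative order of `p` modulo `n = (q-1)/k` equals `m`. -/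
theorem stmt_1 (F : Type*) [Field F] [Fintype F] (p m : ℕ) (hp : p.Prime) (hm : 0 < m)
    (hcard : Fintype.card F = p ^ m) (k : ℕ) (hk : k ∣ p ^ m - 1) (n : ℕ)
    (hn : n = (p ^ m - 1) / k) :
    AddSubgroup.closure (Rset F k) = ⊤ ↔ orderOf (p : ZMod n) = m := by
  classical
  haveI : Fact p.Prime := ⟨hp⟩
  have hq1 : 1 < p ^ m := Nat.one_lt_pow hm.ne' hp.one_lt
  have hk0 : k ≠ 0 := by
    rintro rfl
    rw [Nat.zero_dvd] at hk
    omega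
  have hkn : k * n = p ^ m - 1 := by
    rw [hn]; exact Nat.mul_div_cancel' hk
  have hn0 : n ≠ 0 := by rintro rfl; omega
  have hndvd : n ∣ p ^ m - 1 := ⟨k, by rw [← hkn, Nat.mul_comm]⟩
  -- key numeric translation
  have key : ∀ d : ℕ, (p : ZMod n) ^ d = 1 ↔ n ∣ p ^ d - 1 := by
    intro d
    have hpd : 1 ≤ p ^ d := Nat.one_le_pow _ _ hp.pos
    rw [← Nat.cast_pow, ← Nat.cast_one, ZMod.natCast_eq_natCast_iff]
    constructor
    · intro h; exact (Nat.modEq_iff_dvd' hpd).mp h.symm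
    · intro h; exact ((Nat.modEq_iff_dvd' hpd).mpr h).symm
  have hpm1 : (p : ZMod n) ^ m = 1 := (key m).mpr hndvd
  set e := orderOf (p : ZMod n) with he
  have hedvd : e ∣ m := orderOf_dvd_of_pow_eq_one hpm1
  have he0 : e ≠ 0 := by
    have : IsOfFinOrder (p : ZMod n) := isOfFinOrder_iff_pow_eq_one.mpr ⟨m, hm, hpm1⟩
    exact this.orderOf_pos.ne'
  have hne : n ∣ p ^ e - 1 := (key e).mp (pow_orderOf_eq_one _)
  -- characteristic
  have hchar : CharP F p := by
    obtain ⟨p', hc⟩ := CharP.exists F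
    haveI := hc
    obtain ⟨m', hp', hcard'⟩ := FiniteField.card F p'
    have hpp' : p = p' := by
      have h1 : p ∣ p' ^ (m' : ℕ) := by
        rw [← hcard', hcard]
        exact dvd_pow_self p hm.ne'
      exact ((Nat.prime_dvd_prime_iff_eq hp hp').mp (hp.dvd_of_dvd_pow h1))
    subst hpp'; exact hc
  haveI := hchar
  -- generator of the multiplicative group
  obtain ⟨g, hg⟩ := IsCyclic.exists_generator (α := Fˣ)
  have horderg : orderOf (g : F) = p ^ m - 1 := by
    rw [orderOf_units, orderOf_eq_card_of_forall_mem_zpowers hg, Nat.card_units, Nat.card_eq_fintype_card, hcard]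
  have hx0mem : ((g : F) ^ k) ∈ Rset F k := ⟨(g : F), g.ne_zero, rfl⟩
  have horderx0 : orderOf ((g : F) ^ k) = n := by
    rw [orderOf_pow' _ hk0, horderg, Nat.gcd_eq_right hk, ← hkn,
      Nat.mul_div_cancel_left _ (Nat.pos_of_ne_zero hk0)]
  -- every element of Rset has n-th power one
  have hRn : ∀ x ∈ Rset F k, x ^ n = 1 := by
    rintro x ⟨y, hy, rfl⟩
    rw [← pow_mul, hkn, ← hcard]
    exact FiniteField.pow_card_sub_one_eq_one y hy
  have h1mem : (1 : F) ∈ Rset F k := ⟨1, one_ne_zero, one_pow k⟩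
  -- the additive closure is multiplicatively closed
  have hmul : ∀ a ∈ AddSubgroup.closure (Rset F k), ∀ b ∈ AddSubgroup.closure (Rset F k),
      a * b ∈ AddSubgroup.closure (Rset F k) := by
    intro a ha
    induction ha using AddSubgroup.closure_induction with
    | mem x hx =>
      intro b hb
      induction hb using AddSubgroup.closure_induction with
      | mem y hy =>
        apply AddSubgroup.subset_closure
        obtain ⟨u, hu, rfl⟩ := hx
        obtain ⟨v, hv, rfl⟩ := hy
        exact ⟨u * v, mul_ne_zero hu hv, by rw [mul_pow]⟩
      | zero => simpa using (AddSubgroup.closure (Rset F k)).zero_mem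
      | add y z hy hz ihy ihz => simpa [mul_add] using add_mem ihy ihz
      | neg y hy ihy => simpa [mul_neg] using neg_mem ihy
    | zero => intro b hb; simpa using (AddSubgroup.closure (Rset F k)).zero_mem
    | add x y hx hy ihx ihy =>
      intro b hb
      simpa [add_mul] using add_mem (ihx b hb) (ihy b hb)
    | neg x hx ihx =>
      intro b hb
      simpa [neg_mul] using neg_mem (ihx b hb)
  constructor
  · -- connected → order = m
    intro htop
    -- the fixed points of the e-th iterated Frobenius form an additive subgroup
    set f := iterateFrobenius F p e with hf
    let K : AddSubgroup F :=
      { carrier := {x | f x = x}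
        zero_mem' := map_zero f
        add_mem' := by
          intro a b ha hb
          simp only [Set.mem_setOf_eq] at *
          rw [map_add, ha, hb]
        neg_mem' := by
          intro a ha
          simp only [Set.mem_setOf_eq] at *
          rw [map_neg, ha] }
    have hRK : Rset F k ⊆ K := by
      intro x hx
      obtain ⟨c, hc⟩ := hne
      have hx0 : x ≠ 0 := by
        obtain ⟨y, hy, rfl⟩ := hx
        exact pow_ne_zero _ hy
      have h1 : x ^ (p ^ e - 1) = 1 := by
        rw [hc, pow_mul, hRn x hx, one_pow]
      show f x = x
      rw [hf, iterateFrobenius_def, ← Nat.sub_add_cancel (Nat.one_le_pow e p hp.pos),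
        pow_succ, h1, one_mul]
    have hle : AddSubgroup.closure (Rset F k) ≤ K := (AddSubgroup.closure_le K).mpr hRK
    have hgK : (g : F) ∈ K := hle (htop ▸ AddSubgroup.mem_top (g : F))
    have hgfix : (g : F) ^ (p ^ e) = (g : F) := by
      have := hgK
      change f (g : F) = (g : F) at this
      rwa [hf, iterateFrobenius_def] at this
    have hg1 : (g : F) ^ (p ^ e - 1) = 1 := by
      have h2 : (g : F) ^ (p ^ e - 1) * (g : F) = 1 * (g : F) := by
        rw [one_mul, ← pow_succ, Nat.sub_add_cancel (Nat.one_le_pow e p hp.pos)]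
        exact hgfix
      exact mul_right_cancel₀ g.ne_zero h2
    have hdvd : p ^ m - 1 ∣ p ^ e - 1 := horderg ▸ orderOf_dvd_of_pow_eq_one hg1
    have hpe1 : 1 < p ^ e := Nat.one_lt_pow he0 hp.one_lt
    have hle' : p ^ m - 1 ≤ p ^ e - 1 := Nat.le_of_dvd (by omega) hdvd
    have hm_le : m ≤ e := by
      have hpow : p ^ m ≤ p ^ e := by omega
      exact (Nat.pow_le_pow_iff_right hp.one_lt).mp hpow
    exact Nat.le_antisymm (Nat.le_of_dvd hm hedvd) hm_le
  · -- order = m → connected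
    intro hem
    -- the additive closure is a subring
    let A : Subring F :=
      { carrier := AddSubgroup.closure (Rset F k)
        zero_mem' := (AddSubgroup.closure (Rset F k)).zero_mem
        add_mem' := fun ha hb => (AddSubgroup.closure (Rset F k)).add_mem ha hb
        neg_mem' := fun ha => (AddSubgroup.closure (Rset F k)).neg_mem ha
        one_mem' := AddSubgroup.subset_closure h1mem
        mul_mem' := fun ha hb => hmul _ ha _ hb }
    have hcardeq : Nat.card (AddSubgroup.closure (Rset F k)) = Nat.card A :=
      Nat.card_congr (Equiv.subtypeEquivRight fun x => Iff.rfl)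
    have hdvdcard : Nat.card (AddSubgroup.closure (Rset F k)) ∣ Nat.card F :=
      AddSubgroup.card_addSubgroup_dvd_card _
    rw [hcardeq, Nat.card_eq_fintype_card (α := F), hcard] at hdvdcard
    obtain ⟨d, hdle, hcardA⟩ := (Nat.dvd_prime_pow hp).mp hdvdcard
    -- A is a finite field
    haveI : Fintype A := Fintype.ofFinite A
    letI : Field A := Fintype.fieldOfDomain A
    -- the element g^k lies in A and has multiplicative order n
    have hx0A : ((g : F) ^ k) ∈ A := AddSubgroup.subset_closure hx0mem
    set x₀ : A := ⟨(g : F) ^ k, hx0A⟩ with hx₀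
    have hordA : orderOf x₀ = n := by
      have := orderOf_injective (A.subtype : A →* F) Subtype.coe_injective x₀
      rw [← this]; exact horderx0
    have hx₀ne : x₀ ≠ 0 := by
      intro h
      apply pow_ne_zero k g.ne_zero
      exact congrArg (Subtype.val) h
    obtain ⟨u, hu⟩ := (isUnit_iff_ne_zero.mpr hx₀ne)
    have hordu : orderOf u = n := by rw [← hordA, ← hu, orderOf_units]
    have hdvdu : n ∣ Fintype.card Aˣ := hordu ▸ orderOf_dvd_card
    have hcardAu : Fintype.card Aˣ = p ^ d - 1 := by
      rw [Fintype.card_units, ← Nat.card_eq_fintype_card, ← hcardA]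
    rw [hcardAu] at hdvdu
    have hpd1 : (p : ZMod n) ^ d = 1 := (key d).mpr hdvdu
    have hmd : m ∣ d := hem ▸ orderOf_dvd_of_pow_eq_one hpd1
    have hd0 : d ≠ 0 := by
      rintro rfl
      have hbot : AddSubgroup.closure (Rset F k) = ⊥ :=
        AddSubgroup.eq_bot_of_card_eq _ (by rw [hcardeq, hcardA, pow_zero])
      have h1' : (1 : F) ∈ AddSubgroup.closure (Rset F k) := AddSubgroup.subset_closure h1mem
      rw [hbot, AddSubgroup.mem_bot] at h1'
      exact one_ne_zero h1'
    have hdm : d = m := Nat.le_antisymm hdle (Nat.le_of_dvd (Nat.pos_of_ne_zero hd0) hmd)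
    apply AddSubgroup.eq_top_of_card_eq
    rw [hcardeq, hcardA, hdm, Nat.card_eq_fintype_card (α := F), hcard]
end

section
/- Let q = p^m, k | q-1, n = (q-1)/k, a = ord_n(p), and k_a = (p^a-1)/n. Then the set R_k of nonzero k-th powers in F_q equals the set of nonzero k_a-th powers of elements of the subfield F_a = {x ∈ F_q : x^{p^a} = x}, i.e. R_k = {w^{k_a} : w ∈ F_a, w ≠ 0}. -/
theorem IsCyclic.exists_pow_eq_of_pow_eq_one {G : Type*} [Group G] [Finite G] [IsCyclic G]
    {d e : ℕ} (hde : d * e ∣ Nat.card G) {y : G} (hy : y ^ e = 1) :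
    ∃ x : G, x ^ (d * e) = 1 ∧ x ^ d = y := by
  obtain ⟨g, hg⟩ := IsCyclic.exists_generator (α := G)
  obtain ⟨i, rfl⟩ : ∃ i : ℕ, g ^ i = y := mem_powers_iff_mem_zpowers.mpr (hg y)
  obtain ⟨c, hc⟩ := hde
  have hord : orderOf g = d * e * c := (orderOf_eq_card_of_forall_mem_zpowers hg).trans hc
  have he : e ≠ 0 := by
    rintro rfl
    simp [Nat.card_pos.ne'] at hc
  have hie : d * c * e ∣ i * e := by
    rw [mul_right_comm, ← hord, orderOf_dvd_iff_pow_eq_one, pow_mul, hy]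
  -- with `|G| = d e c` and `y = g ^ i`, the witness is `g ^ (i / d)`, which lies in the
  -- subgroup of order `d e` because `d c ∣ i`
  obtain ⟨j, rfl⟩ := Nat.dvd_of_mul_dvd_mul_right (Nat.pos_of_ne_zero he) hie
  refine ⟨g ^ (c * j), ?_, ?_⟩
  · rw [← pow_mul, show c * j * (d * e) = d * e * c * j by ring, ← hord, pow_mul,
      pow_orderOf_eq_one, one_pow]
  · rw [← pow_mul]
    ring_nf

theorem pow_eq_self_and_ne_zero_iff {M₀ : Type*} [MonoidWithZero M₀] [IsRightCancelMulZero M₀]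
    {b : ℕ} (hb : 0 < b) {w : M₀} :
    w ^ b = w ∧ w ≠ 0 ↔ w ≠ 0 ∧ w ^ (b - 1) = 1 := by
  rw [and_comm, and_congr_right_iff]
  intro hw
  rw [← Nat.sub_add_cancel hb, pow_succ, mul_eq_right₀ hw, Nat.add_sub_cancel]

namespace FiniteField

variable {F : Type*} [Field F] [Fintype F]

theorem pow_eq_one_iff_exists_pow {d e : ℕ} (hde : d * e ∣ Fintype.card F - 1) {y : F} :
    y ^ e = 1 ↔ ∃ x : F, x ≠ 0 ∧ x ^ (d * e) = 1 ∧ x ^ d = y := by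
  classical
  refine ⟨fun hy => ?_, fun ⟨x, _, hx, hxy⟩ => by rw [← hxy, ← pow_mul, hx]⟩
  have he : e ≠ 0 := by
    rintro rfl
    have := Fintype.one_lt_card (α := F)
    simp only [mul_zero, zero_dvd_iff] at hde
    omega
  obtain ⟨u, rfl⟩ := IsUnit.of_pow_eq_one hy he
  rw [← Fintype.card_units, ← Nat.card_eq_fintype_card] at hde
  obtain ⟨x, hx, hxu⟩ := IsCyclic.exists_pow_eq_of_pow_eq_one hde (Units.val_eq_one.mp (by simpa))
  exact ⟨x, x.ne_zero, by simp [← Units.val_pow_eq_pow_val, hx], by rw [← hxu]; simp⟩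

theorem Rset_eq_pow_eq_one {k n : ℕ} (hkn : k * n = Fintype.card F - 1) :
    Rset F k = {x : F | x ^ n = 1} := by
  ext x
  simp only [Rset, Set.mem_ofPred_eq, pow_eq_one_iff_exists_pow hkn.dvd, hkn]
  exact exists_congr fun y =>
    ⟨fun ⟨hy, hyx⟩ => ⟨hy, pow_card_sub_one_eq_one y hy, hyx⟩, fun ⟨hy, _, hyx⟩ => ⟨hy, hyx⟩⟩

theorem setOf_pow_eq_self_pow_eq {b ka n : ℕ} (hb : 0 < b) (hkan : ka * n = b - 1)
    (hdvd : b - 1 ∣ Fintype.card F - 1) :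
    {x : F | ∃ w : F, w ^ b = w ∧ w ≠ 0 ∧ w ^ ka = x} = {x : F | x ^ n = 1} := by
  ext x
  simp only [Set.mem_ofPred_eq, pow_eq_one_iff_exists_pow (hkan ▸ hdvd), ← and_assoc,
    pow_eq_self_and_ne_zero_iff hb, hkan]

end FiniteField

theorem ZMod.natCast_pow_eq_one_iff_dvd {b n i : ℕ} (hb : 0 < b) :
    (b : ZMod n) ^ i = 1 ↔ n ∣ b ^ i - 1 := by
  rw [← ZMod.natCast_eq_zero_iff, Nat.cast_sub (Nat.one_le_pow _ _ hb), sub_eq_zero]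
  push_cast
  rfl

theorem stmt_6_general (F : Type*) [Field F] [Fintype F] (p m : ℕ) (hp : p.Prime)
    (hcard : Fintype.card F = p ^ m) (k : ℕ) (hk : k ∣ p ^ m - 1)
    (n a ka : ℕ) (hn : n = (p ^ m - 1) / k) (ha : a = orderOf (p : ZMod n))
    (hka : ka = (p ^ a - 1) / n) :
    Rset F k = {x : F | ∃ w : F, w ^ p ^ a = w ∧ w ≠ 0 ∧ w ^ ka = x} := by
  have hkn : k * n = p ^ m - 1 := hn ▸ Nat.mul_div_cancel' hk
  have hna : n ∣ p ^ a - 1 :=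
    (ZMod.natCast_pow_eq_one_iff_dvd hp.pos).mp (ha ▸ pow_orderOf_eq_one _)
  have ham : a ∣ m :=
    ha ▸ orderOf_dvd_of_pow_eq_one ((ZMod.natCast_pow_eq_one_iff_dvd hp.pos).mpr ⟨k, by lia⟩)
  rw [FiniteField.Rset_eq_pow_eq_one (hcard ▸ hkn),
    FiniteField.setOf_pow_eq_self_pow_eq (pow_pos hp.pos a) (hka ▸ Nat.div_mul_cancel hna)
      (hcard ▸ Nat.pow_sub_one_dvd_pow_sub_one p ham)]

/-- `R_k` equals the set of nonzero `k_a`-th powers of elements of the subfield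
`F_a = {x : x^(p^a) = x}`, where `a = ord_n(p)`, `k_a = (p^a-1)/n`. -/
theorem stmt_6 (F : Type*) [Field F] [Fintype F] (p m : ℕ) (hp : p.Prime) (hm : 0 < m)
    (hcard : Fintype.card F = p ^ m) (k : ℕ) (hkpos : 0 < k) (hk : k ∣ p ^ m - 1)
    (n a ka : ℕ) (hn : n = (p ^ m - 1) / k) (ha : a = orderOf (p : ZMod n))
    (hka : ka = (p ^ a - 1) / n) :
    Rset F k = {x : F | ∃ w : F, w ^ p ^ a = w ∧ w ≠ 0 ∧ w ^ ka = x} :=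
  stmt_6_general F p m hp hcard k hk n a ka hn ha hka
end

section
/- Let q = p^m, k | q-1, n = (q-1)/k, a = ord_n(p), k_a = (p^a-1)/n, and F_a = {x ∈ F_q : x^{p^a} = x}. Then the induced subgraph of Γ(k,q) on F_a is isomorphic to the generalized Paley graph Γ(k_a, p^a) = Cay(F_{p^a}, R_{k_a}). -/
open Polynomial

lemma mem_Rset_iff {F : Type*} [Field F] [Fintype F] {k n : ℕ} (hn : 0 < n)
    (h : n * k = Fintype.card F - 1) {x : F} : x ∈ Rset F k ↔ x ≠ 0 ∧ x ^ n = 1 := by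
  classical
  constructor
  · rintro ⟨y, hy0, rfl⟩
    refine ⟨pow_ne_zero _ hy0, ?_⟩
    rw [← pow_mul, mul_comm k n, h, FiniteField.pow_card_sub_one_eq_one y hy0]
  · rintro ⟨hx0, hxn⟩
    lift x to Fˣ using hx0.isUnit
    obtain ⟨g, hg⟩ := IsCyclic.exists_generator (α := Fˣ)
    have hog : orderOf g = n * k := by
      rw [orderOf_eq_card_of_forall_mem_zpowers hg, Nat.card_eq_fintype_card,
        Fintype.card_units, h]
    obtain ⟨i, hi⟩ := (mem_powers_iff_mem_zpowers).mpr (hg x)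
    simp only at hi
    have hxn' : x ^ n = 1 := by
      ext
      push_cast
      exact hxn
    have hdvd : orderOf g ∣ i * n := by
      apply orderOf_dvd_of_pow_eq_one
      rw [pow_mul, hi, hxn']
    rw [hog] at hdvd
    have hki : k ∣ i := by
      have : n * k ∣ n * i := by rwa [mul_comm i n] at hdvd
      exact (Nat.mul_dvd_mul_iff_left hn).mp this
    obtain ⟨j, rfl⟩ := hki
    refine ⟨((g ^ j : Fˣ) : F), Units.ne_zero _, ?_⟩
    rw [← Units.val_pow_eq_pow_val, ← pow_mul, mul_comm j k]
    exact congrArg Units.val hi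

lemma exists_prim {F : Type*} [Field F] [Fintype F] {d : ℕ} (hd : 0 < d)
    (hdvd : d ∣ Fintype.card F - 1) : ∃ ζ : F, IsPrimitiveRoot ζ d := by
  classical
  obtain ⟨g, hg⟩ := IsCyclic.exists_generator (α := Fˣ)
  have hog : orderOf g = Fintype.card F - 1 := by
    rw [orderOf_eq_card_of_forall_mem_zpowers hg, Nat.card_eq_fintype_card,
      Fintype.card_units]
  obtain ⟨e, he⟩ := hdvd
  have he0 : 0 < e := by
    rcases Nat.eq_zero_or_pos e with h | h
    · exfalso
      rw [h, Nat.mul_zero] at he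
      have h2 : 1 < Fintype.card F := Fintype.one_lt_card
      omega
    · exact h
  have hoe : orderOf (g ^ e) = d := by
    rw [orderOf_pow, hog, he, Nat.gcd_eq_right ⟨d, mul_comm d e ▸ rfl⟩,
      Nat.mul_div_cancel d he0]
  refine ⟨((g ^ e : Fˣ) : F), ?_⟩
  rw [← hoe]
  exact IsPrimitiveRoot.coe_units_iff.mpr (IsPrimitiveRoot.orderOf _)

lemma card_pow_eq_one {F : Type*} [Field F] [Fintype F] {d : ℕ} (hd : 0 < d)
    (hdvd : d ∣ Fintype.card F - 1) : Set.ncard {x : F | x ^ d = 1} = d := by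
  obtain ⟨ζ, hζ⟩ := exists_prim hd hdvd
  have : {x : F | x ^ d = 1} = ↑(nthRootsFinset d (1 : F)) := by
    ext x
    simp [Polynomial.mem_nthRootsFinset hd]
  rw [this, Set.ncard_coe_finset, hζ.card_nthRootsFinset]

/-- The induced subgraph of `Γ(k,q)` on the subfield `F_a = {x : x^(p^a) = x}` is
isomorphic to `Γ(k_a, p^a)`: there is a bijection preserving arcs both ways. -/
theorem stmt_8 (F K : Type*) [Field F] [Fintype F] [Field K] [Fintype K]
    (p m : ℕ) (hp : p.Prime) (hm : 0 < m)
    (hcard : Fintype.card F = p ^ m) (k : ℕ) (hkpos : 0 < k) (hk : k ∣ p ^ m - 1)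
    (n a ka : ℕ) (hn : n = (p ^ m - 1) / k) (ha : a = orderOf (p : ZMod n))
    (hka : ka = (p ^ a - 1) / n) (hK : Fintype.card K = p ^ a) :
    ∃ e : {x : F // x ^ p ^ a = x} ≃ K,
      ∀ u v : {x : F // x ^ p ^ a = x},
        (v.val - u.val ∈ Rset F k) ↔ (e v - e u ∈ Rset K ka) := by
  classical
  have hpm : 1 < p ^ m := Nat.one_lt_pow hm.ne' hp.one_lt
  have hnk : n * k = p ^ m - 1 := by rw [hn]; exact Nat.div_mul_cancel hk
  have hn0 : 0 < n := by
    rcases Nat.eq_zero_or_pos n with h | h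
    · rw [h, Nat.zero_mul] at hnk; omega
    · exact h
  have hdn : n ∣ p ^ m - 1 := ⟨k, hnk.symm⟩
  have hpn : ((p : ZMod n)) ^ m = 1 := by
    have h0 : ((p ^ m - 1 : ℕ) : ZMod n) = 0 := (ZMod.natCast_eq_zero_iff _ _).mpr hdn
    rw [Nat.cast_sub hpm.le] at h0
    push_cast at h0
    exact sub_eq_zero.mp h0
  have hfin : IsOfFinOrder (p : ZMod n) := isOfFinOrder_iff_pow_eq_one.mpr ⟨m, hm, hpn⟩
  have ha0 : 0 < a := ha ▸ (orderOf_pos_iff.mpr hfin)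
  have hpa1 : (p : ZMod n) ^ a = 1 := ha ▸ pow_orderOf_eq_one _
  have hpa : 1 < p ^ a := Nat.one_lt_pow ha0.ne' hp.one_lt
  have hna : n ∣ p ^ a - 1 := by
    rw [← ZMod.natCast_eq_zero_iff, Nat.cast_sub hpa.le]
    push_cast
    rw [hpa1, sub_self]
  have hnka : n * ka = p ^ a - 1 := by rw [hka]; exact Nat.mul_div_cancel' hna
  have ham : a ∣ m := by
    rw [ha]; exact orderOf_dvd_of_pow_eq_one hpn
  have hdvdq : p ^ a - 1 ∣ p ^ m - 1 := by
    obtain ⟨t, rfl⟩ := ham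
    rw [pow_mul]
    simpa using Nat.sub_dvd_pow_sub_pow (p ^ a) 1 t
  -- characteristic
  have hrc : ringChar F = p := by
    obtain ⟨n', hp', hFc⟩ := FiniteField.card F (ringChar F)
    have hdvd : p ∣ ringChar F := by
      have h1 : p ∣ Fintype.card F := by rw [hcard]; exact dvd_pow_self p hm.ne'
      rw [hFc] at h1
      exact hp.dvd_of_dvd_pow h1
    exact ((Nat.prime_dvd_prime_iff_eq hp hp').mp hdvd).symm
  haveI hchar : CharP F p := hrc ▸ ringChar.charP F
  haveI : Fact p.Prime := ⟨hp⟩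
  -- the subfield of elements fixed by the a-th power of Frobenius
  let Sf : Subfield F :=
    { carrier := {x : F | x ^ p ^ a = x}
      mul_mem' := by
        intro x y hx hy
        simp only [Set.mem_setOf_eq] at *
        rw [mul_pow, hx, hy]
      one_mem' := one_pow _
      add_mem' := by
        intro x y hx hy
        simp only [Set.mem_setOf_eq] at *
        rw [add_pow_char_pow, hx, hy]
      zero_mem' := zero_pow (by positivity)
      neg_mem' := by
        intro x hx
        simp only [Set.mem_setOf_eq] at *
        rw [neg_pow, neg_one_pow_char_pow, hx, neg_one_mul]
      inv_mem' := by
        intro x hx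
        simp only [Set.mem_setOf_eq] at *
        rw [inv_pow, hx] }
  -- cardinality of the subfield
  have hd1 : 0 < p ^ a - 1 := by omega
  have hset : {x : F | x ^ p ^ a = x} = insert (0 : F) {x : F | x ^ (p ^ a - 1) = 1} := by
    ext x
    simp only [Set.mem_setOf_eq, Set.mem_insert_iff]
    constructor
    · intro hx
      rcases eq_or_ne x 0 with h | h
      · exact Or.inl h
      · refine Or.inr ?_
        have h2 : x ^ (p ^ a - 1) * x = 1 * x := by
          rw [← pow_succ, Nat.sub_add_cancel hpa.le, hx, one_mul]
        exact mul_right_cancel₀ h h2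
    · rintro (rfl | hx)
      · exact zero_pow (by positivity)
      · rw [← Nat.sub_add_cancel hpa.le, pow_succ, hx, one_mul]
  have hdq : p ^ a - 1 ∣ Fintype.card F - 1 := by rw [hcard]; exact hdvdq
  have hc1 : Set.ncard {x : F | x ^ (p ^ a - 1) = 1} = p ^ a - 1 := card_pow_eq_one hd1 hdq
  have h0mem : (0 : F) ∉ {x : F | x ^ (p ^ a - 1) = 1} := by
    simp [zero_pow hd1.ne']
  have hins : ({x : F | x ^ p ^ a = x}).ncard = (p ^ a - 1) + 1 := by
    rw [hset, Set.ncard_insert_of_notMem h0mem (Set.toFinite _), hc1]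
  have hcardSf : Fintype.card ↥Sf = p ^ a := by
    rw [← Nat.card_eq_fintype_card]
    have h2 : Nat.card ↥Sf = ({x : F | x ^ p ^ a = x}).ncard := by
      rw [← Nat.card_coe_set_eq]
      exact Nat.card_congr (Equiv.subtypeEquivRight fun x => Iff.rfl)
    rw [h2, hins]
    omega
  let e' : ↥Sf ≃+* K := FiniteField.ringEquivOfCardEq (by rw [hcardSf, hK])
  let j : {x : F // x ^ p ^ a = x} ≃ ↥Sf := Equiv.subtypeEquivRight (fun x => Iff.rfl)
  refine ⟨j.trans e'.toEquiv, ?_⟩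
  intro u v
  have key : ∀ x : F, x ∈ Rset F k ↔ x ≠ 0 ∧ x ^ n = 1 := fun x =>
    mem_Rset_iff hn0 (by rw [hcard]; exact hnk)
  have keyK : ∀ x : K, x ∈ Rset K ka ↔ x ≠ 0 ∧ x ^ n = 1 := fun x =>
    mem_Rset_iff hn0 (by rw [hK]; exact hnka)
  set w : ↥Sf := j v - j u with hw
  have hwv : (w : F) = v.val - u.val := by
    simp [hw, j]
  have hev : (j.trans e'.toEquiv) v - (j.trans e'.toEquiv) u = e' w := by
    show e' (j v) - e' (j u) = e' (j v - j u)
    exact (e'.map_sub _ _).symm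
  rw [hev, key, keyK, ← hwv]
  have h0iff : e' w = 0 ↔ w = 0 := by
    rw [← map_zero e']
    exact (EquivLike.injective e').eq_iff
  have h1iff : (e' w) ^ n = 1 ↔ w ^ n = 1 := by
    rw [← map_pow, ← map_one e']
    exact (EquivLike.injective e').eq_iff
  simp only [ne_eq, h0iff, h1iff]
  norm_cast
end

section
/- Let q = p^m, k | q-1, n = (q-1)/k, a = ord_n(p). Then the connected components of Γ(k,q) are exactly the p^{m-a} induced subgraphs on the additive cosets F_a + h, h ∈ F_q, of the subfield F_a; in particular Γ(k,q) has exactly p^{m-a} connected components, all mutually isomorphic. -/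
lemma closure_Rset_eq {F : Type*} [Field F] [Fintype F] (p m : ℕ) (hp : p.Prime) (hm : 0 < m)
    (hcard : Fintype.card F = p ^ m) (k : ℕ) (hkpos : 0 < k) (hk : k ∣ p ^ m - 1)
    (n a : ℕ) (hn : n = (p ^ m - 1) / k) (ha : a = orderOf (p : ZMod n)) :
    ((AddSubgroup.closure (Rset F k) : AddSubgroup F) : Set F) = {x : F | x ^ p ^ a = x} ∧
      Nat.card (AddSubgroup.closure (Rset F k)) = p ^ a ∧ a ≤ m := by
  have hp2 : 2 ≤ p := hp.two_le
  -- char of F is p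
  haveI : Fact p.Prime := ⟨hp⟩
  have hchar : CharP F p := by
    obtain ⟨c, hc⟩ := CharP.exists F
    haveI := hc
    obtain ⟨b, hcp, hcb⟩ := FiniteField.card F c
    have : p ∣ c ^ (b : ℕ) := by
      rw [← hcb, hcard]; exact dvd_pow_self p hm.ne'
    have hpc : p = c := ((Nat.prime_dvd_prime_iff_eq hp hcp).mp (hp.dvd_of_dvd_pow this))
    rwa [hpc]
  haveI := hchar
  set q := p ^ m with hq
  have hq2 : 2 ≤ q := by
    calc 2 ≤ p := hp2
    _ ≤ p ^ m := Nat.le_self_pow hm.ne' p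
  have hnk : n * k = q - 1 := by rw [hn]; exact Nat.div_mul_cancel hk
  have hnpos : 0 < n := by
    rcases Nat.eq_zero_or_pos n with h0 | h; · simp [h0] at hnk; omega
    exact h
  haveI : NeZero n := ⟨hnpos.ne'⟩
  have hnk' : n ∣ q - 1 := ⟨k, hnk.symm⟩
  -- n ∣ p^a - 1
  have hdvd_of_pow : ∀ c : ℕ, (p : ZMod n) ^ c = 1 → n ∣ p ^ c - 1 := by
    intro c hc
    have h1 : ((p ^ c : ℕ) : ZMod n) = ((1 : ℕ) : ZMod n) := by push_cast; simpa using hc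
    have := (ZMod.natCast_eq_natCast_iff _ _ _).mp h1
    exact (Nat.modEq_iff_dvd' (Nat.one_le_pow _ _ (by omega))).mp this.symm
  have hpow_of_dvd : ∀ c : ℕ, n ∣ p ^ c - 1 → (p : ZMod n) ^ c = 1 := by
    intro c hc
    have : (1 : ℕ) ≡ p ^ c [MOD n] := (Nat.modEq_iff_dvd' (Nat.one_le_pow _ _ (by omega))).mpr hc
    have h1 := (ZMod.natCast_eq_natCast_iff _ _ _).mpr this
    push_cast at h1; exact h1.symm
  have hpm1 : (p : ZMod n) ^ m = 1 := hpow_of_dvd m hnk'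
  have hapos : 0 < a := by
    rw [ha]
    exact orderOf_pos_iff.mpr (isOfFinOrder_iff_pow_eq_one.mpr ⟨m, hm, hpm1⟩)
  have ham : a ∣ m := ha ▸ orderOf_dvd_of_pow_eq_one hpm1
  have hna : n ∣ p ^ a - 1 := hdvd_of_pow a (by rw [ha]; exact pow_orderOf_eq_one _)
  set S := Rset F k with hS
  set H := AddSubgroup.closure S with hH
  -- facts about S
  have hSn : ∀ s ∈ S, s ≠ 0 ∧ s ^ n = 1 := by
    rintro s ⟨y, hy0, rfl⟩
    refine ⟨pow_ne_zero _ hy0, ?_⟩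
    rw [← pow_mul, mul_comm k n, hnk, ← hcard]
    exact FiniteField.pow_card_sub_one_eq_one y hy0
  have hSE : ∀ s ∈ S, s ^ p ^ a = s := by
    intro s hs
    obtain ⟨hs0, hs1⟩ := hSn s hs
    obtain ⟨t, ht⟩ := hna
    have hpa : p ^ a = n * t + 1 := by
      have : 1 ≤ p ^ a := Nat.one_le_pow _ _ (by omega)
      omega
    rw [hpa, pow_succ, pow_mul, hs1, one_pow, one_mul]
  -- E is the fixed set of iterated Frobenius
  have hfrob : ∀ x : F, (iterateFrobenius F p a) x = x ^ p ^ a := fun x => iterateFrobenius_def p a x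
  -- H ⊆ E
  have hHE : ∀ x ∈ H, x ^ p ^ a = x := by
    intro x hx
    induction hx using AddSubgroup.closure_induction with
    | mem s hs => exact hSE s hs
    | zero => exact zero_pow (pow_pos hp.pos a).ne'
    | add u v _ _ ihu ihv => rw [add_pow_char_pow, ihu, ihv]
    | neg u _ ihu => rw [← hfrob (-u), map_neg, hfrob, ihu]
  -- H is closed under multiplication
  have hSS : ∀ s ∈ S, ∀ t ∈ S, s * t ∈ S := by
    rintro s ⟨y, hy0, rfl⟩ t ⟨z, hz0, rfl⟩
    exact ⟨y * z, mul_ne_zero hy0 hz0, by rw [mul_pow]⟩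
  have hSmulH : ∀ s ∈ S, ∀ x ∈ H, s * x ∈ H := by
    intro s hs x hx
    induction hx using AddSubgroup.closure_induction with
    | mem t ht => exact AddSubgroup.subset_closure (hSS s hs t ht)
    | zero => simpa using H.zero_mem
    | add u v _ _ ihu ihv => rw [mul_add]; exact H.add_mem ihu ihv
    | neg u _ ihu => rw [mul_neg]; exact H.neg_mem ihu
  have hmulH : ∀ x ∈ H, ∀ y ∈ H, x * y ∈ H := by
    intro x hx
    induction hx using AddSubgroup.closure_induction with
    | mem s hs => intro y hy; exact hSmulH s hs y hy
    | zero => intro y hy; simpa using H.zero_mem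
    | add u v hu hv ihu ihv => intro y hy; rw [add_mul]; exact H.add_mem (ihu y hy) (ihv y hy)
    | neg u hu ihu => intro y hy; rw [neg_mul]; exact H.neg_mem (ihu y hy)
  have honeS : (1 : F) ∈ S := ⟨1, one_ne_zero, one_pow k⟩
  -- H as a subring
  let sm : Submonoid F := ⟨⟨(H : Set F), fun {x y} hx hy => hmulH _ hx _ hy⟩,
    AddSubgroup.subset_closure honeS⟩
  let R : Subring F := Subring.mk' (H : Set F) sm H rfl rfl
  have hRH : ∀ x : F, x ∈ R ↔ x ∈ H := fun x => Iff.rfl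
  classical
  letI : Fintype ↥R := Fintype.ofFinite _
  letI : Field ↥R := (Finite.isField_of_domain ↥R).toField
  haveI hRchar : CharP ↥R p := inferInstance
  obtain ⟨b, -, hcardR⟩ := FiniteField.card ↥R p
  -- an element of multiplicative order n inside R
  obtain ⟨g, hg⟩ := IsCyclic.exists_generator (α := Fˣ)
  have hgord : orderOf g = q - 1 := by
    rw [orderOf_eq_card_of_forall_mem_zpowers hg, Nat.card_eq_fintype_card,
      Fintype.card_units, hcard]
  set u := g ^ k with hu
  have huord : orderOf u = n := by
    rw [hu, orderOf_pow, hgord, Nat.gcd_eq_right hk, ← hnk, Nat.mul_div_cancel _ hkpos]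
  have hζS : ((u : Fˣ) : F) ∈ S := ⟨(g : F), Units.ne_zero g, by rw [← Units.val_pow_eq_pow_val]⟩
  have hζH : ((u : Fˣ) : F) ∈ H := AddSubgroup.subset_closure hζS
  let z : ↥R := ⟨((u : Fˣ) : F), hζH⟩
  have hzord : orderOf z = n := by
    have h1 : orderOf (R.subtype.toMonoidHom z) = orderOf z :=
      orderOf_injective R.subtype.toMonoidHom Subtype.coe_injective z
    have h2 : R.subtype.toMonoidHom z = ((u : Fˣ) : F) := rfl
    rw [h2] at h1
    rw [← h1, orderOf_units, huord]
  have hz0 : z ≠ 0 := by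
    intro h
    exact Units.ne_zero u (congrArg Subtype.val h)
  have hnb : n ∣ p ^ (b : ℕ) - 1 := by
    rw [← hzord, ← hcardR]
    exact orderOf_dvd_of_pow_eq_one (FiniteField.pow_card_sub_one_eq_one z hz0)
  have hab : a ∣ (b : ℕ) := ha ▸ orderOf_dvd_of_pow_eq_one (hpow_of_dvd _ hnb)
  have hpab : p ^ a ≤ p ^ (b : ℕ) := Nat.pow_le_pow_right hp.pos (Nat.le_of_dvd b.pos hab)
  -- the fixed set of Frobenius^a has at most p^a elements
  set N := p ^ a with hN
  have hN2 : 2 ≤ N := by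
    calc 2 ≤ p := hp2
    _ ≤ p ^ a := Nat.le_self_pow hapos.ne' p
  set f : Polynomial F := Polynomial.X ^ N - Polynomial.X with hf
  have hN1 : ¬ N = 1 := by omega
  have hN1' : ¬ 1 = N := by omega
  have hcN : f.coeff N = 1 := by
    simp [hf, Polynomial.coeff_X_pow, Polynomial.coeff_X, hN1, hN1']
  have hf0 : f ≠ 0 := fun h => by simp [h] at hcN
  have hdegf : f.natDegree ≤ N := le_trans (Polynomial.natDegree_sub_le _ _)
    (by rw [Polynomial.natDegree_X_pow, Polynomial.natDegree_X]; omega)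
  have hEsub : {x : F | x ^ N = x} = (↑f.roots.toFinset : Set F) := by
    ext x
    simp [hf, Polynomial.mem_roots', hf0, Polynomial.IsRoot, sub_eq_zero]
    exact fun _ h => hf0 (by rw [hf, h, sub_self])
  have hEcard : Set.ncard {x : F | x ^ N = x} ≤ N := by
    rw [hEsub, Set.ncard_coe_finset]
    exact le_trans (Multiset.toFinset_card_le _) (le_trans (Polynomial.card_roots' f) hdegf)
  have hHcard : Nat.card ↥H = p ^ (b : ℕ) := by
    rw [← hcardR, ← Nat.card_eq_fintype_card]
    exact Nat.card_congr (Equiv.subtypeEquivRight (fun x => (hRH x).symm))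
  have hHn : (H : Set F).ncard = Nat.card ↥H := (Nat.card_coe_set_eq _).symm
  have hHE' : (H : Set F) ⊆ {x : F | x ^ N = x} := fun x hx => hHE x hx
  have hge : (H : Set F).ncard ≤ N := le_trans (Set.ncard_le_ncard hHE' (Set.toFinite _)) hEcard
  have hle : N ≤ (H : Set F).ncard := by rw [hHn, hHcard]; exact hpab
  refine ⟨Set.eq_of_subset_of_ncard_le hHE' (by omega) (Set.toFinite _), ?_, Nat.le_of_dvd hm ham⟩
  rw [← hHn]; omega



/-- EqvGen of a "difference in S" relation is difference in the generated subgroup. -/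
lemma eqvGen_iff_sub_mem {G : Type*} [AddCommGroup G] (S : Set G) (Adj : G → G → Prop)
    (hAdj : ∀ u v, Adj u v ↔ v - u ∈ S) (x y : G) :
    Relation.EqvGen Adj x y ↔ x - y ∈ AddSubgroup.closure S := by
  constructor
  · intro h
    induction h with
    | rel u v huv =>
        have : v - u ∈ AddSubgroup.closure S := AddSubgroup.subset_closure ((hAdj u v).mp huv)
        simpa using (AddSubgroup.closure S).neg_mem this
    | refl u => simpa using (AddSubgroup.closure S).zero_mem
    | symm u v _ ih => simpa using (AddSubgroup.closure S).neg_mem ih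
    | trans u v w _ _ ih1 ih2 =>
        have := (AddSubgroup.closure S).add_mem ih1 ih2
        simpa using this
  · intro h
    have key : ∀ h ∈ AddSubgroup.closure S, ∀ x : G, Relation.EqvGen Adj (x + h) x := by
      intro h hh
      induction hh using AddSubgroup.closure_induction with
      | mem s hs =>
          intro x
          exact Relation.EqvGen.symm _ _ (Relation.EqvGen.rel _ _ ((hAdj x (x + s)).mpr (by simpa using hs)))
      | zero => intro x; simpa using Relation.EqvGen.refl x
      | add h h' _ _ ih ih' =>
          intro x
          have h1 : Relation.EqvGen Adj (x + (h + h')) (x + h') := by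
            have := ih (x + h')
            simpa [add_assoc, add_comm, add_left_comm] using this
          exact Relation.EqvGen.trans _ _ _ h1 (ih' x)
      | neg h _ ih =>
          intro x
          have := ih (x + -h)
          have h2 : Relation.EqvGen Adj x (x + -h) := by simpa [add_assoc] using this
          exact Relation.EqvGen.symm _ _ h2
    have := key _ h y
    simpa [add_comm, sub_add_cancel, add_sub_cancel] using this

/-- The connected components of `Γ(k,q)` are exactly the additive cosets of the
subfield `F_a = {x : x^(p^a) = x}`: two vertices lie in the same component iff
their difference lies in `F_a`, and there are exactly `p^(m-a)` components. -/
theorem stmt_9 (F : Type*) [Field F] [Fintype F] (p m : ℕ) (hp : p.Prime) (hm : 0 < m)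
    (hcard : Fintype.card F = p ^ m) (k : ℕ) (hkpos : 0 < k) (hk : k ∣ p ^ m - 1)
    (n a : ℕ) (hn : n = (p ^ m - 1) / k) (ha : a = orderOf (p : ZMod n))
    (Adj : F → F → Prop) (hAdj : ∀ u v, Adj u v ↔ v - u ∈ Rset F k) :
    (∀ x y : F, Relation.EqvGen Adj x y ↔ (x - y) ^ p ^ a = x - y) ∧
      Nat.card (Quot Adj) = p ^ (m - a) := by
  obtain ⟨hset, hcardH, ham⟩ := closure_Rset_eq (F := F) p m hp hm hcard k hkpos hk n a hn ha
  set H := AddSubgroup.closure (Rset F k) with hHdef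
  have hmem : ∀ z : F, z ∈ H ↔ z ^ p ^ a = z := fun z => Set.ext_iff.mp hset z
  have hEqv : ∀ x y : F, Relation.EqvGen Adj x y ↔ x - y ∈ H :=
    fun x y => eqvGen_iff_sub_mem _ Adj hAdj x y
  refine ⟨fun x y => (hEqv x y).trans (hmem (x - y)), ?_⟩
  have e : Quot Adj ≃ (F ⧸ H) :=
    { toFun := Quot.lift (fun x => (QuotientAddGroup.mk x : F ⧸ H))
        (fun x y hxy => (QuotientAddGroup.eq).mpr (by
          have h1 : y - x ∈ H := AddSubgroup.subset_closure ((hAdj x y).mp hxy)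
          simpa [sub_eq_neg_add] using h1)),
      invFun := fun c => Quotient.liftOn c (fun x => Quot.mk Adj x)
        (fun x y hxy => by
          have h1 : -x + y ∈ H := QuotientAddGroup.leftRel_apply.mp hxy
          have h2 : x - y ∈ H := by
            have := H.neg_mem h1
            simpa [sub_eq_add_neg, add_comm, neg_add_rev] using this
          exact Quot.eqvGen_sound ((hEqv x y).mpr h2)),
      left_inv := fun c => Quot.inductionOn c fun x => rfl,
      right_inv := fun c => Quotient.inductionOn c fun x => rfl }
  rw [Nat.card_congr e]
  have hq := AddSubgroup.card_eq_card_quotient_mul_card_addSubgroup H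
  rw [Nat.card_eq_fintype_card, hcard, hcardH] at hq
  have hpa : 0 < p ^ a := pow_pos hp.pos a
  have hsplit : p ^ m = p ^ (m - a) * p ^ a := by
    rw [← pow_add, Nat.sub_add_cancel ham]
  exact Nat.eq_of_mul_eq_mul_right hpa (by rw [← hq, ← hsplit])
end

section
/- Let q = p^m be a prime power and k | q-1 such that Γ(k,q) is connected. Then Γ(k,q) is bipartite if and only if q = 2 and k = 1 (in which case Γ(1,2) = K_2). -/
/-! A proper 2-colouring of a Cayley graph `Cay(G, S)` flips colour along every arc, so no sum
of an odd number of elements of `S` vanishes (there is no closed walk of odd length). For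
`S = R_k ⊆ F_q`: summing `1 ∈ R_k` `q` times gives `0`, so `q` is even; then every `a ∈ R_k` has
odd order dividing `q - 1`, and for `a ≠ 1` the geometric sum `1 + a + ⋯ + a ^ (ord a - 1)`
vanishes. Hence `R_k = {1}`, which generates only the prime field `F_2`, so connectivity
forces `q = 2`. -/

open Finset

section TwoColoring

variable {G : Type*} [AddCommGroup G] {S : Set G} {c : G → Bool}

theorem coloring_add_sum (hc : ∀ u v, v - u ∈ S → c u ≠ c v) {s : ℕ → G} (hs : ∀ i, s i ∈ S)
    (u : G) (n : ℕ) : c (u + ∑ i ∈ range n, s i) = (c u ^^ decide (Odd n)) := by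
  induction n with
  | zero => simp
  | succ n ih =>
    have hstep := hc (u + ∑ i ∈ range n, s i) (u + ∑ i ∈ range (n + 1), s i)
      (by simpa [sum_range_succ] using hs n)
    rw [ih] at hstep
    simp only [Nat.odd_add_one, decide_not]
    revert hstep
    cases c u <;> cases decide (Odd n) <;> cases c (u + ∑ i ∈ range (n + 1), s i) <;> simp_all

theorem sum_ne_zero_of_odd (hc : ∀ u v, v - u ∈ S → c u ≠ c v) {s : ℕ → G}
    (hs : ∀ i, s i ∈ S) {n : ℕ} (hn : Odd n) : ∑ i ∈ range n, s i ≠ 0 := by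
  intro h0
  simpa [h0, hn] using coloring_add_sum hc hs 0 n

end TwoColoring

section Rset

variable {F : Type*} [Field F] {k : ℕ}

theorem one_mem_Rset : (1 : F) ∈ Rset F k := ⟨1, one_ne_zero, one_pow k⟩

theorem pow_mem_Rset {a : F} (ha : a ∈ Rset F k) (i : ℕ) : a ^ i ∈ Rset F k := by
  obtain ⟨y, hy, rfl⟩ := ha
  exact ⟨y ^ i, pow_ne_zero i hy, by rw [← pow_mul, ← pow_mul, mul_comm]⟩

variable [Fintype F] {c : F → Bool} (hc : ∀ u v, v - u ∈ Rset F k → c u ≠ c v)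
include hc

theorem even_card_of_Rset_coloring : Even (Fintype.card F) := by
  by_contra hodd
  refine sum_ne_zero_of_odd hc (s := fun _ => 1) (fun _ => one_mem_Rset)
    (Nat.not_even_iff_odd.mp hodd) ?_
  simp

theorem eq_one_of_mem_Rset_of_coloring (hq : Odd (Fintype.card F - 1)) {a : F}
    (ha : a ∈ Rset F k) : a = 1 := by
  by_contra ha1
  have ha0 : a ≠ 0 := by
    obtain ⟨y, hy, rfl⟩ := ha
    exact pow_ne_zero k hy
  have hord : Odd (orderOf a) :=
    hq.of_dvd_nat (orderOf_dvd_of_pow_eq_one (FiniteField.pow_card_sub_one_eq_one a ha0))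
  refine sum_ne_zero_of_odd hc (pow_mem_Rset ha) hord ?_
  have hgeom := geom_sum_mul a (orderOf a)
  rw [pow_orderOf_eq_one, sub_self] at hgeom
  exact (mul_eq_zero.mp hgeom).resolve_right (sub_ne_zero.mpr ha1)

end Rset

theorem card_le_two_of_closure_one_eq_top {F : Type*} [Field F] [Fintype F] (h2 : (2 : F) = 0)
    (h : AddSubgroup.closure {(1 : F)} = ⊤) : Fintype.card F ≤ 2 := by
  have : CharP F 2 := (CharP.charP_iff_prime_eq_zero Nat.prime_two).mpr (by exact_mod_cast h2)
  refine (Fintype.card_le_of_surjective (ZMod.castHom (dvd_refl 2) F) fun x => ?_).trans_eq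
    (ZMod.card 2)
  obtain ⟨n, rfl⟩ := AddSubgroup.mem_closure_singleton.mp (h ▸ AddSubgroup.mem_top x)
  exact ⟨n, by simp⟩

theorem eq_zero_or_eq_one_of_card_eq_two {F : Type*} [Field F] [Fintype F]
    (hcard : Fintype.card F = 2) (x : F) : x = 0 ∨ x = 1 := by
  refine or_iff_not_imp_left.mpr fun hx => ?_
  simpa [hcard] using FiniteField.pow_card_sub_one_eq_one x hx

theorem stmt_17_general (F : Type*) [Field F] [Fintype F] (p m : ℕ) (hp : p.Prime)
    (hcard : Fintype.card F = p ^ m)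
    (k : ℕ) (hk : k ∣ p ^ m - 1)
    (hconn : AddSubgroup.closure (Rset F k) = ⊤) :
    (∃ c : F → Bool, ∀ u v : F, v - u ∈ Rset F k → c u ≠ c v) ↔
      (p ^ m = 2 ∧ k = 1) := by
  constructor
  · rintro ⟨c, hc⟩
    have heven := even_card_of_Rset_coloring hc
    obtain ⟨hp_even, hm⟩ := Nat.even_pow.mp (hcard ▸ heven)
    obtain rfl := hp.even_iff.mp hp_even
    have hR : Rset F k ⊆ {1} := fun a ha => eq_one_of_mem_Rset_of_coloring hc
      (Nat.Even.sub_odd Fintype.card_pos heven odd_one) ha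
    have h2 : (2 : F) = 0 := by
      have := FiniteField.cast_card_eq_zero F
      rw [hcard, Nat.cast_pow, pow_eq_zero_iff hm] at this
      exact_mod_cast this
    have hq : 2 ^ m = 2 := by
      have hle := card_le_two_of_closure_one_eq_top h2
        (top_le_iff.mp (hconn ▸ AddSubgroup.closure_mono hR))
      have hlt := Fintype.one_lt_card (α := F)
      omega
    exact ⟨hq, Nat.dvd_one.mp (by simpa [hq] using hk)⟩
  · rintro ⟨hq, rfl⟩
    classical
    refine ⟨fun x => decide (x = 0), fun u v ⟨y, hy, hyuv⟩ => ?_⟩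
    have huv : v ≠ u := sub_ne_zero.mp (by rwa [← hyuv, pow_one])
    have h01 := eq_zero_or_eq_one_of_card_eq_two (hcard.trans hq)
    rcases h01 u with rfl | rfl <;> rcases h01 v with rfl | rfl <;> simp_all

/-- If `Γ(k,q)` is connected (the connection set generates `F_q` additively), then
it is bipartite iff `q = 2` and `k = 1` (in which case `Γ(1,2) = K_2`). -/
theorem stmt_17 (F : Type*) [Field F] [Fintype F] (p m : ℕ) (hp : p.Prime)
    (hm : 0 < m) (hcard : Fintype.card F = p ^ m)
    (k : ℕ) (hkpos : 0 < k) (hk : k ∣ p ^ m - 1)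
    (hconn : AddSubgroup.closure (Rset F k) = ⊤) :
    (∃ c : F → Bool, ∀ u v : F, v - u ∈ Rset F k → c u ≠ c v) ↔
      (p ^ m = 2 ∧ k = 1) :=
  stmt_17_general F p m hp hcard k hk hconn
end
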